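/- arXiv:1303.5472 — 6 statements merged into one kernel-verified Lean document; each statement's English description precedes it below -/
import Mathlib

section
/- Let X, Y ∈ Mₙ(ℂ) and suppose there exists a nonzero vector p ∈ ℂⁿ with X·p = 0 and Y·p = 0. Then Y·adj(X) = 0, where adj(X) denotes the adjugate (matrix of cofactors, transposed) of X. -/
/-!
The range of `adj X` lies in `ker X`, since `X * adj X = det X • 1 = 0`. If `ker X` is
spanned by `p`, that range is killed by `Y`. Otherwise `ker X` contains a vector `q`
independent of `p`. For each `i`, the vector `q i • p - p i • q` (or `p` itself if `p i = 0`)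
is a nonzero kernel vector with vanishing `i`-th entry, so it also lies in the kernel of `X`
with row `j` replaced by `eᵢ`, whose determinant is `adj X i j`. Hence `adj X = 0`.
-/

open Matrix

namespace Matrix

variable {n : Type*} [Fintype n] [DecidableEq n]

theorem adjugate_apply_eq_zero_of_mulVec_eq_zero {R : Type*} [CommRing R] [IsDomain R]
    {A : Matrix n n R} {v : n → R} {i : n} (hv : v ≠ 0) (hAv : A *ᵥ v = 0) (hvi : v i = 0)
    (j : n) : A.adjugate i j = 0 := by
  rw [adjugate_apply, ← exists_mulVec_eq_zero_iff]
  refine ⟨v, hv, ?_⟩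
  simp [updateRow_mulVec, hAv, hvi]

variable {K : Type*} [Field K]

theorem adjugate_eq_zero_of_linearIndependent {A : Matrix n n K} {p q : n → K}
    (hpq : LinearIndependent K ![p, q]) (hp : A *ᵥ p = 0) (hq : A *ᵥ q = 0) :
    A.adjugate = 0 := by
  ext i j
  by_cases hpi : p i = 0
  · exact adjugate_apply_eq_zero_of_mulVec_eq_zero (by simpa using hpq.ne_zero 0) hp hpi j
  · have hv : q i • p - p i • q ≠ 0 := by
      intro h
      have hcoeff :=
        LinearIndependent.pair_iff.mp hpq (q i) (-p i) (by rwa [neg_smul, ← sub_eq_add_neg])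
      exact hpi (neg_eq_zero.mp hcoeff.2)
    refine adjugate_apply_eq_zero_of_mulVec_eq_zero hv ?_ ?_ j
    · simp [mulVec_sub, mulVec_smul, hp, hq]
    · simp [mul_comm]

theorem mulVec_adjugate_mulVec_of_det_eq_zero {A : Matrix n n K} (hA : A.det = 0) (v : n → K) :
    A *ᵥ (A.adjugate *ᵥ v) = 0 := by
  rw [mulVec_mulVec, mul_adjugate, hA, zero_smul, zero_mulVec]

theorem mul_adjugate_eq_zero_of_mulVec_eq_zero {A B : Matrix n n K} {p : n → K} (hp : p ≠ 0)
    (hA : A *ᵥ p = 0) (hB : B *ᵥ p = 0) : B * A.adjugate = 0 := by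
  have hdet : A.det = 0 := exists_mulVec_eq_zero_iff.mp ⟨p, hp, hA⟩
  refine ext_iff_mulVec.mpr fun v ↦ ?_
  rw [← mulVec_mulVec, zero_mulVec]
  by_cases hdep : ∃ c : K, c • p = A.adjugate *ᵥ v
  · obtain ⟨c, hc⟩ := hdep
    rw [← hc, mulVec_smul, hB, smul_zero]
  · have hind := (LinearIndependent.pair_iff' hp).mpr (not_exists.mp hdep)
    have hker := mulVec_adjugate_mulVec_of_det_eq_zero hdet v
    rw [adjugate_eq_zero_of_linearIndependent hind hA hker, zero_mulVec, mulVec_zero]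

end Matrix

/-- If a nonzero vector `p` satisfies `X·p = 0` and `Y·p = 0`, then `Y·adj(X) = 0`,
where `adj X` is the adjugate (transposed matrix of cofactors) of `X`. -/
theorem mul_adjugate_eq_zero_of_common_kernel {n : ℕ}
    (X Y : Matrix (Fin n) (Fin n) ℂ) (p : Fin n → ℂ) (hp : p ≠ 0)
    (hX : X.mulVec p = 0) (hY : Y.mulVec p = 0) :
    Y * X.adjugate = 0 :=
  mul_adjugate_eq_zero_of_mulVec_eq_zero hp hX hY
end

section
/- Let λ₀ ∈ ℂ, let J ≤ K be positive integers and let L be a natural number with L < J. Let U, W, M₁, M₂, D : ℂ → Mₙ(ℂ) be matrix-valued functions analytic at λ₀ with D(λ₀) invertible, and let α, β ∈ ℂ. Suppose the function λ ↦ α·U(λ) + β·W(λ) vanishes at λ₀ together with its Taylor coefficients up to order L (i.e. it vanishes to order at least L+1 at λ₀). Then the function λ ↦ α·((λ−λ₀)ᴶ·M₁(λ) + D(λ)·U(λ)·D(λ)⁻¹) + β·((λ−λ₀)ᴷ·M₂(λ) + D(λ)·W(λ)·D(λ)⁻¹) also vanishes to order at least L+1 at λ₀. (This is the statement that the linear constraints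 α·uₘ + β·wₘ = 0, m = 0,…,L, on the Taylor coefficients of U and W are preserved by the Darboux–Bäcklund transformation.) -/
attribute [local instance] Matrix.normedAddCommGroup Matrix.normedSpace

open Matrix Filter

/-!
Both summands `(λ-λ₀)ᴶ M₁` and `(λ-λ₀)ᴷ M₂` vanish to order `K ≥ J ≥ L+1` on their own, and the
conjugation parts combine to `D (αU + βW) D⁻¹`; conjugating by the matrices `D` and `D⁻¹`, both
analytic at `λ₀`, does not lower the order of vanishing.
-/

theorem map_ringInverse {M N F : Type*} [MonoidWithZero M] [MonoidWithZero N] [EquivLike F M N]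
    [MulEquivClass F M N] (φ : F) (a : M) : φ (Ring.inverse a) = Ring.inverse (φ a) := by
  by_cases ha : IsUnit a
  · obtain ⟨u, rfl⟩ := ha
    simpa using (Ring.inverse_unit (Units.map (φ : M →* N) u)).symm
  · rw [Ring.inverse_non_unit _ ha, Ring.inverse_non_unit _ ((MulEquiv.isUnit_map φ).not.mpr ha)]
    exact map_zero φ

namespace Matrix

variable {𝕜 ι : Type*} [RCLike 𝕜] [Fintype ι] [DecidableEq ι]

/-- Transports matrix multiplication and inversion, for the entrywise sup norm, into the complete
normed algebra of operators, where their analyticity is known. -/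
noncomputable def toEuclideanCLE :
    Matrix ι ι 𝕜 ≃L[𝕜] (EuclideanSpace 𝕜 ι →L[𝕜] EuclideanSpace 𝕜 ι) :=
  (toEuclideanCLM (n := ι) (𝕜 := 𝕜)).toAlgEquiv.toLinearEquiv.toContinuousLinearEquiv

theorem toEuclideanCLE_mul (A B : Matrix ι ι 𝕜) :
    toEuclideanCLE (A * B) = toEuclideanCLE A * toEuclideanCLE B :=
  map_mul (toEuclideanCLM (n := ι) (𝕜 := 𝕜)) A B

theorem toEuclideanCLE_inv (A : Matrix ι ι 𝕜) :
    toEuclideanCLE A⁻¹ = Ring.inverse (toEuclideanCLE A) := by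
  rw [nonsing_inv_eq_ringInverse]
  exact map_ringInverse (toEuclideanCLM (n := ι) (𝕜 := 𝕜)) A

end Matrix

section MatrixAnalytic

variable {𝕜 E ι : Type*} [RCLike 𝕜] [NormedAddCommGroup E] [NormedSpace 𝕜 E]
  [Fintype ι] [DecidableEq ι] {f g : E → Matrix ι ι 𝕜} {x : E}

theorem AnalyticAt.matrix_mul (hf : AnalyticAt 𝕜 f x) (hg : AnalyticAt 𝕜 g x) :
    AnalyticAt 𝕜 (fun z => f z * g z) x := by
  let φ : Matrix ι ι 𝕜 ≃L[𝕜] _ := toEuclideanCLE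
  have hfg : (fun z => f z * g z) = fun z => φ.symm (φ (f z) * φ (g z)) := by
    simp [φ, ← toEuclideanCLE_mul]
  rw [hfg]
  exact (φ.symm.analyticAt _).fun_comp
    (((φ.analyticAt _).fun_comp hf).mul ((φ.analyticAt _).fun_comp hg))

theorem AnalyticAt.matrix_inv (hf : AnalyticAt 𝕜 f x) (hx : IsUnit (f x)) :
    AnalyticAt 𝕜 (fun z => (f z)⁻¹) x := by
  let φ : Matrix ι ι 𝕜 ≃L[𝕜] _ := toEuclideanCLE
  have hf_inv : (fun z => (f z)⁻¹) = fun z => φ.symm (Ring.inverse (φ (f z))) := by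
    simp [φ, ← toEuclideanCLE_inv]
  rw [hf_inv]
  have hφx : IsUnit (φ (f x)) := hx.map (toEuclideanCLM (n := ι) (𝕜 := 𝕜))
  have hinv : AnalyticAt 𝕜 Ring.inverse (φ (f x)) := analyticAt_inverse hφx.unit
  have hφf : AnalyticAt 𝕜 (fun z => φ (f z)) x := (φ.analyticAt _).fun_comp hf
  exact (φ.symm.analyticAt _).fun_comp (hinv.fun_comp (f := fun z => φ (f z)) hφf)

end MatrixAnalytic

section VanishesToOrder

variable {𝕜 E : Type*} [NontriviallyNormedField 𝕜] [NormedAddCommGroup E] [NormedSpace 𝕜 E]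
  {f f' : 𝕜 → E} {m : ℕ} {z₀ : 𝕜}

/-- For analytic `f` this is `m ≤ analyticOrderAt f z₀` (`natCast_le_analyticOrderAt`);
here `f` itself need not be analytic. -/
def VanishesToOrderAt (f : 𝕜 → E) (m : ℕ) (z₀ : 𝕜) : Prop :=
  ∃ g : 𝕜 → E, AnalyticAt 𝕜 g z₀ ∧ ∀ᶠ z in nhds z₀, f z = (z - z₀) ^ m • g z

theorem VanishesToOrderAt.congr (hf : VanishesToOrderAt f m z₀) (h : f =ᶠ[nhds z₀] f') :
    VanishesToOrderAt f' m z₀ := by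
  obtain ⟨g, hg, hfg⟩ := hf
  exact ⟨g, hg, by filter_upwards [hfg, h] with z hz hz' using hz' ▸ hz⟩

theorem VanishesToOrderAt.add (hf : VanishesToOrderAt f m z₀) (hf' : VanishesToOrderAt f' m z₀) :
    VanishesToOrderAt (fun z => f z + f' z) m z₀ := by
  obtain ⟨g, hg, hfg⟩ := hf
  obtain ⟨g', hg', hfg'⟩ := hf'
  refine ⟨fun z => g z + g' z, hg.add hg', ?_⟩
  filter_upwards [hfg, hfg'] with z hz hz'
  rw [hz, hz', smul_add]

theorem AnalyticAt.vanishesToOrderAt_pow_smul {M : 𝕜 → E} (hM : AnalyticAt 𝕜 M z₀) {J : ℕ}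
    (hmJ : m ≤ J) : VanishesToOrderAt (fun z => (z - z₀) ^ J • M z) m z₀ := by
  refine ⟨fun z => (z - z₀) ^ (J - m) • M z, ((analyticAt_id.sub analyticAt_const).pow _).smul hM,
    Eventually.of_forall fun z => ?_⟩
  rw [smul_smul, ← pow_add, Nat.add_sub_cancel' hmJ]

end VanishesToOrder

theorem VanishesToOrderAt.matrix_conj {𝕜 ι : Type*} [RCLike 𝕜] [Fintype ι] [DecidableEq ι]
    {f P Q : 𝕜 → Matrix ι ι 𝕜} {m : ℕ} {z₀ : 𝕜} (hf : VanishesToOrderAt f m z₀)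
    (hP : AnalyticAt 𝕜 P z₀) (hQ : AnalyticAt 𝕜 Q z₀) :
    VanishesToOrderAt (fun z => P z * f z * Q z) m z₀ := by
  obtain ⟨g, hg, hfg⟩ := hf
  refine ⟨fun z => P z * g z * Q z, (hP.matrix_mul hg).matrix_mul hQ, ?_⟩
  filter_upwards [hfg] with z hz
  rw [hz, Matrix.mul_smul, Matrix.smul_mul]

theorem linear_invariants_preserved_general {n : ℕ}
    (lam₀ : ℂ) (J K L : ℕ) (hJK : J ≤ K) (hL : L < J)
    (U W M₁ M₂ D : ℂ → Matrix (Fin n) (Fin n) ℂ)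
    (hM₁ : AnalyticAt ℂ M₁ lam₀) (hM₂ : AnalyticAt ℂ M₂ lam₀)
    (hD : AnalyticAt ℂ D lam₀) (hDinv : IsUnit (D lam₀))
    (a b : ℂ)
    (hvan : ∃ g : ℂ → Matrix (Fin n) (Fin n) ℂ, AnalyticAt ℂ g lam₀ ∧
      ∀ᶠ lam in nhds lam₀, a • U lam + b • W lam = (lam - lam₀) ^ (L + 1) • g lam) :
    ∃ h : ℂ → Matrix (Fin n) (Fin n) ℂ, AnalyticAt ℂ h lam₀ ∧
      ∀ᶠ lam in nhds lam₀,
        a • ((lam - lam₀) ^ J • M₁ lam + D lam * U lam * (D lam)⁻¹)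
          + b • ((lam - lam₀) ^ K • M₂ lam + D lam * W lam * (D lam)⁻¹)
        = (lam - lam₀) ^ (L + 1) • h lam := by
  have hM₁_van := (hM₁.fun_const_smul (c := a)).vanishesToOrderAt_pow_smul hL
  have hM₂_van := (hM₂.fun_const_smul (c := b)).vanishesToOrderAt_pow_smul (hL.trans_le hJK)
  have hconj_van := VanishesToOrderAt.matrix_conj hvan hD (hD.matrix_inv hDinv)
  refine ((hM₁_van.add hM₂_van).add hconj_van).congr (Eventually.of_forall fun lam => ?_)
  simp only [smul_add, Matrix.mul_add, Matrix.add_mul, Matrix.mul_smul, Matrix.smul_mul,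
    smul_comm a, smul_comm b]
  abel

/-- **Linear invariants of the Darboux–Bäcklund transformation.** If `α·U + β·W` vanishes
to order at least `L+1` at `λ₀` (`L < J ≤ K`), with `U, W, M₁, M₂, D` analytic at `λ₀` and
`D λ₀` invertible, then `α·((λ−λ₀)ᴶM₁ + D·U·D⁻¹) + β·((λ−λ₀)ᴷM₂ + D·W·D⁻¹)` also vanishes
to order at least `L+1` at `λ₀`. -/
theorem linear_invariants_preserved {n : ℕ}
    (lam₀ : ℂ) (J K L : ℕ) (hJ : 0 < J) (hJK : J ≤ K) (hL : L < J)
    (U W M₁ M₂ D : ℂ → Matrix (Fin n) (Fin n) ℂ)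
    (hU : AnalyticAt ℂ U lam₀) (hW : AnalyticAt ℂ W lam₀)
    (hM₁ : AnalyticAt ℂ M₁ lam₀) (hM₂ : AnalyticAt ℂ M₂ lam₀)
    (hD : AnalyticAt ℂ D lam₀) (hDinv : IsUnit (D lam₀))
    (a b : ℂ)
    (hvan : ∃ g : ℂ → Matrix (Fin n) (Fin n) ℂ, AnalyticAt ℂ g lam₀ ∧
      ∀ᶠ lam in nhds lam₀, a • U lam + b • W lam = (lam - lam₀) ^ (L + 1) • g lam) :
    ∃ h : ℂ → Matrix (Fin n) (Fin n) ℂ, AnalyticAt ℂ h lam₀ ∧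
      ∀ᶠ lam in nhds lam₀,
        a • ((lam - lam₀) ^ J • M₁ lam + D lam * U lam * (D lam)⁻¹)
          + b • ((lam - lam₀) ^ K • M₂ lam + D lam * W lam * (D lam)⁻¹)
        = (lam - lam₀) ^ (L + 1) • h lam :=
  linear_invariants_preserved_general lam₀ J K L hJK hL U W M₁ M₂ D hM₁ hM₂ hD hDinv a b hvan
end

section
/- Let P ∈ Mₙ(ℂ) satisfy P² = P and P ᴴ = P, and let d := rank P. Then Tr( ((d/n)·I − P)² ) = d − d²/n. Consequently, in the Darboux–Bianchi transformation r̃ = r + (2 Im λ₁ / |λ − λ₁|²)·Φ⁻¹·i((d/n)·I − P)·Φ for su(n) soliton surfaces with Φ unitary, the squared length −2·Tr((r̃ − r)²)·(|λ−λ₁|²/(2 Im λ₁))² = 2(d − d²/n) of the normalized segment, and hence the length of the segment r̃ − r, does not depend on x¹, x². -/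
open Matrix

/-!
An idempotent matrix is a projection onto its range, so its trace is its rank `d`. Expanding
with `P² = P` gives `((d/n)·I − P)² = (d/n)²·I − (2d/n − 1)·P`, whose trace is `d − d²/n`.
The trace of a square is invariant under conjugation by any invertible `Φ`, in particular a
unitary one, and the factor `i² = −1` turns `−2·Tr` into `2·Tr`.
-/

theorem Matrix.trace_eq_rank_of_isIdempotentElem {K ι : Type*} [Field K] [Fintype ι]
    [DecidableEq ι] {P : Matrix ι ι K} (hP : IsIdempotentElem P) :
    P.trace = P.rank := by
  have hlin : IsIdempotentElem P.toLin' := hP.map Matrix.toLinAlgEquiv'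
  rw [← Matrix.trace_toLin'_eq,
    LinearMap.IsProj.trace ((LinearMap.isProj_range_iff_isIdempotentElem _).mpr hlin)]
  rfl

theorem Matrix.trace_smul_one_sub_mul_self {R ι : Type*} [CommRing R] [Fintype ι]
    [DecidableEq ι] {P : Matrix ι ι R} (hP : IsIdempotentElem P) (c : R) :
    trace ((c • 1 - P) * (c • 1 - P)) = c ^ 2 * Fintype.card ι - (2 * c - 1) * trace P := by
  have hsq : (c • 1 - P) * (c • 1 - P) = (c ^ 2) • (1 : Matrix ι ι R) - (2 * c - 1) • P := by
    simp only [sub_mul, mul_sub, hP.eq, one_mul, mul_one, smul_mul_assoc, mul_smul_comm]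
    module
  rw [hsq, trace_sub, trace_smul, trace_smul, trace_one, smul_eq_mul, smul_eq_mul]

theorem Matrix.trace_conj'_mul_self {K ι : Type*} [Field K] [Fintype ι]
    [DecidableEq ι] {Φ : Matrix ι ι K} (hΦ : IsUnit Φ) (A : Matrix ι ι K) :
    trace ((Φ⁻¹ * A * Φ) * (Φ⁻¹ * A * Φ)) = trace (A * A) := by
  have hdet : IsUnit Φ.det := (isUnit_iff_isUnit_det Φ).mp hΦ
  rw [show Φ⁻¹ * A * Φ * (Φ⁻¹ * A * Φ) = Φ⁻¹ * (A * A) * Φ by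
    simp only [Matrix.mul_assoc, mul_nonsing_inv_cancel_left _ _ hdet], trace_conj' hΦ]

theorem darboux_bianchi_segment_length_general {n : ℕ}
    (P : Matrix (Fin n) (Fin n) ℂ) (hP : P * P = P)
    (d : ℕ) (hd : d = P.rank) :
    Matrix.trace ((((d : ℂ) / n) • (1 : Matrix (Fin n) (Fin n) ℂ) - P) *
        (((d : ℂ) / n) • (1 : Matrix (Fin n) (Fin n) ℂ) - P))
      = (d : ℂ) - (d : ℂ) ^ 2 / n ∧
    ∀ Φ : Matrix (Fin n) (Fin n) ℂ, Φᴴ * Φ = 1 →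
      -2 * Matrix.trace
          ((Φ⁻¹ * (Complex.I • (((d : ℂ) / n) • (1 : Matrix (Fin n) (Fin n) ℂ) - P)) * Φ) *
           (Φ⁻¹ * (Complex.I • (((d : ℂ) / n) • (1 : Matrix (Fin n) (Fin n) ℂ) - P)) * Φ))
        = 2 * ((d : ℂ) - (d : ℂ) ^ 2 / n) := by
  have hsq : Matrix.trace ((((d : ℂ) / n) • (1 : Matrix (Fin n) (Fin n) ℂ) - P) *
      (((d : ℂ) / n) • (1 : Matrix (Fin n) (Fin n) ℂ) - P)) = (d : ℂ) - (d : ℂ) ^ 2 / n := by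
    rw [trace_smul_one_sub_mul_self hP, trace_eq_rank_of_isIdempotentElem hP, ← hd,
      Fintype.card_fin]
    rcases eq_or_ne (n : ℂ) 0 with hn | hn
    · simp [hn]
    · field_simp
      ring
  refine ⟨hsq, fun Φ hΦ => ?_⟩
  have hunit : IsUnit Φ :=
    (isUnit_iff_isUnit_det Φ).mpr (isUnit_det_of_left_inverse hΦ)
  rw [trace_conj'_mul_self hunit, smul_mul_smul_comm, Complex.I_mul_I, trace_smul,
    hsq, smul_eq_mul]
  ring

/-- For a Hermitian projector `P` of rank `d` on `ℂⁿ`,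
`Tr(((d/n)·I − P)²) = d − d²/n`; consequently, for any unitary `Φ`, the squared length
`−2·Tr((Φ⁻¹·i((d/n)I − P)·Φ)²) = 2(d − d²/n)` of the normalized segment `r̃ − r` of the
Darboux–Bianchi transformation does not depend on `x¹, x²` (i.e. not on `Φ`). -/
theorem darboux_bianchi_segment_length {n : ℕ} (hn : 0 < n)
    (P : Matrix (Fin n) (Fin n) ℂ) (hP : P * P = P) (hPh : Pᴴ = P)
    (d : ℕ) (hd : d = P.rank) :
    Matrix.trace ((((d : ℂ) / n) • (1 : Matrix (Fin n) (Fin n) ℂ) - P) *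
        (((d : ℂ) / n) • (1 : Matrix (Fin n) (Fin n) ℂ) - P))
      = (d : ℂ) - (d : ℂ) ^ 2 / n ∧
    ∀ Φ : Matrix (Fin n) (Fin n) ℂ, Φᴴ * Φ = 1 →
      -2 * Matrix.trace
          ((Φ⁻¹ * (Complex.I • (((d : ℂ) / n) • (1 : Matrix (Fin n) (Fin n) ℂ) - P)) * Φ) *
           (Φ⁻¹ * (Complex.I • (((d : ℂ) / n) • (1 : Matrix (Fin n) (Fin n) ℂ) - P)) * Φ))
        = 2 * ((d : ℂ) - (d : ℂ) ^ 2 / n) :=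
  darboux_bianchi_segment_length_general P hP d hd
end

section
/- Let φ : ℝ² → ℝ be twice continuously differentiable, and let e₁ = −(i/2)[[0,1],[1,0]], e₂ = −(i/2)[[0,−i],[i,0]], e₃ = −(i/2)[[1,0],[0,−1]] be the standard su(2) basis. For ζ ∈ ℂ, ζ ≠ 0, define U₁(ζ) := −ζ·e₃ − φ,₁·e₂ and U₂(ζ) := ζ⁻¹·(cos φ · e₃ − sin φ · e₁). Then the zero curvature condition ∂₂U₁(ζ) − ∂₁U₂(ζ) + U₁(ζ)U₂(ζ) − U₂(ζ)U₁(ζ) = 0 holds for all ζ ≠ 0 if and only if φ satisfies the sine-Gordon equation φ,₁₂ = sin φ. -/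
attribute [local instance] Matrix.normedAddCommGroup Matrix.normedSpace

noncomputable section
open Matrix

/-- The su(2) basis vector `e₁ = −(i/2)[[0,1],[1,0]]`. -/
def su2e₁ : Matrix (Fin 2) (Fin 2) ℂ := (-(Complex.I / 2)) • !![(0 : ℂ), 1; 1, 0]

/-- The su(2) basis vector `e₂ = −(i/2)[[0,−i],[i,0]]`. -/
def su2e₂ : Matrix (Fin 2) (Fin 2) ℂ :=
  (-(Complex.I / 2)) • !![(0 : ℂ), -Complex.I; Complex.I, 0]

/-- The su(2) basis vector `e₃ = −(i/2)[[1,0],[0,−1]]`. -/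
def su2e₃ : Matrix (Fin 2) (Fin 2) ℂ := (-(Complex.I / 2)) • !![(1 : ℂ), 0; 0, -1]

/-- `φ,₁ = ∂φ/∂x¹`. -/
def pd1 (φ : ℝ × ℝ → ℝ) (x : ℝ × ℝ) : ℝ := fderiv ℝ φ x (1, 0)

/-- `φ,₁₂ = ∂²φ/∂x²∂x¹`. -/
def pd12 (φ : ℝ × ℝ → ℝ) (x : ℝ × ℝ) : ℝ := fderiv ℝ (pd1 φ) x (0, 1)

/-- `U₁(ζ) = −ζ·e₃ − φ,₁·e₂`. -/
def sgU₁ (φ : ℝ × ℝ → ℝ) (ζ : ℂ) (x : ℝ × ℝ) : Matrix (Fin 2) (Fin 2) ℂ :=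
  -(ζ • su2e₃) - (pd1 φ x : ℂ) • su2e₂

/-- `U₂(ζ) = ζ⁻¹·(cos φ·e₃ − sin φ·e₁)`. -/
def sgU₂ (φ : ℝ × ℝ → ℝ) (ζ : ℂ) (x : ℝ × ℝ) : Matrix (Fin 2) (Fin 2) ℂ :=
  ζ⁻¹ • ((Real.cos (φ x) : ℂ) • su2e₃ - (Real.sin (φ x) : ℂ) • su2e₁)

/-! The zero curvature expression is computed in the basis `e₁, e₂, e₃` from the commutation
relations alone: `⁅U₁, U₂⁆` contributes `sin φ • e₂` plus `ζ⁻¹`-terms that cancel exactly against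
`∂₁U₂`, so for every `ζ ≠ 0` the expression equals `(sin φ − φ,₁₂) • e₂`, which vanishes iff the
sine-Gordon equation holds because `e₂ ≠ 0`. -/

-- Matrices carry the commutator bracket, but the `LieRing` structure behind the bilinearity
-- lemmas for `⁅_, _⁆` is not a global instance.
attribute [local instance] LieRing.ofAssociativeRing

lemma su2e₁_lie_su2e₂ : ⁅su2e₁, su2e₂⁆ = su2e₃ := by
  ext i j
  fin_cases i <;> fin_cases j <;> norm_num [Ring.lie_def, su2e₁, su2e₂, su2e₃, Complex.ext_iff]

lemma su2e₂_lie_su2e₃ : ⁅su2e₂, su2e₃⁆ = su2e₁ := by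
  ext i j
  fin_cases i <;> fin_cases j <;> norm_num [Ring.lie_def, su2e₁, su2e₂, su2e₃, Complex.ext_iff]

lemma su2e₃_lie_su2e₁ : ⁅su2e₃, su2e₁⁆ = su2e₂ := by
  ext i j
  fin_cases i <;> fin_cases j <;> norm_num [Ring.lie_def, su2e₁, su2e₂, su2e₃, Complex.ext_iff]

lemma su2e₂_ne_zero : su2e₂ ≠ 0 := fun h => by
  simpa [su2e₂] using congrFun (congrFun h 0) 1

theorem HasFDerivAt.ofReal_smul_const {E F : Type*} [NormedAddCommGroup E] [NormedSpace ℝ E]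
    [NormedAddCommGroup F] [NormedSpace ℂ F] {f : E → ℝ} {f' : E →L[ℝ] ℝ} {x : E}
    (hf : HasFDerivAt f f' x) (A : F) :
    HasFDerivAt (fun y => (f y : ℂ) • A) ((Complex.ofRealCLM.comp f').smulRight A) x :=
  (Complex.ofRealCLM.hasFDerivAt.comp x hf).smul_const A

lemma contDiff_pd1 {φ : ℝ × ℝ → ℝ} {n : WithTop ℕ∞} (hφ : ContDiff ℝ (n + 1) φ) :
    ContDiff ℝ n (pd1 φ) :=
  (hφ.fderiv_right le_rfl).clm_apply contDiff_const

lemma fderiv_sgU₁_apply {φ : ℝ × ℝ → ℝ} {x : ℝ × ℝ} (h : DifferentiableAt ℝ (pd1 φ) x)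
    (ζ : ℂ) (v : ℝ × ℝ) :
    fderiv ℝ (sgU₁ φ ζ) x v = -((fderiv ℝ (pd1 φ) x v : ℂ) • su2e₂) := by
  have hU : HasFDerivAt (sgU₁ φ ζ)
      (-(Complex.ofRealCLM.comp (fderiv ℝ (pd1 φ) x)).smulRight su2e₂) x :=
    (h.hasFDerivAt.ofReal_smul_const su2e₂).const_sub (-(ζ • su2e₃))
  simp [hU.fderiv]

lemma fderiv_sgU₂_apply {φ : ℝ × ℝ → ℝ} {x : ℝ × ℝ} (h : DifferentiableAt ℝ φ x)
    (ζ : ℂ) (v : ℝ × ℝ) :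
    fderiv ℝ (sgU₂ φ ζ) x v = ζ⁻¹ • (-(Real.sin (φ x) * fderiv ℝ φ x v : ℂ) • su2e₃
      - (Real.cos (φ x) * fderiv ℝ φ x v : ℂ) • su2e₁) := by
  have hU : HasFDerivAt (sgU₂ φ ζ)
      (ζ⁻¹ • ((Complex.ofRealCLM.comp (-Real.sin (φ x) • fderiv ℝ φ x)).smulRight su2e₃ -
        (Complex.ofRealCLM.comp (Real.cos (φ x) • fderiv ℝ φ x)).smulRight su2e₁)) x :=
    ((h.hasFDerivAt.cos.ofReal_smul_const su2e₃).fun_sub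
      (h.hasFDerivAt.sin.ofReal_smul_const su2e₁)).fun_const_smul ζ⁻¹
  simp [hU.fderiv]

lemma lie_sgU₁_sgU₂ {ζ : ℂ} (hζ : ζ ≠ 0) (φ : ℝ × ℝ → ℝ) (x : ℝ × ℝ) :
    ⁅sgU₁ φ ζ x, sgU₂ φ ζ x⁆ = (Real.sin (φ x) : ℂ) • su2e₂
      - ζ⁻¹ • ((pd1 φ x * Real.cos (φ x) : ℂ) • su2e₁ + (pd1 φ x * Real.sin (φ x) : ℂ) • su2e₃) := by
  simp only [sgU₁, sgU₂, lie_sub, sub_lie, lie_smul, smul_lie, neg_lie, lie_self,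
    su2e₃_lie_su2e₁, su2e₂_lie_su2e₃, ← lie_skew su2e₂ su2e₁, su2e₁_lie_su2e₂]
  match_scalars <;> field_simp

lemma zeroCurvature_sgU {ζ : ℂ} (hζ : ζ ≠ 0) {φ : ℝ × ℝ → ℝ} {x : ℝ × ℝ}
    (hφ : DifferentiableAt ℝ φ x) (hφ₁ : DifferentiableAt ℝ (pd1 φ) x) :
    fderiv ℝ (sgU₁ φ ζ) x (0, 1) - fderiv ℝ (sgU₂ φ ζ) x (1, 0) + ⁅sgU₁ φ ζ x, sgU₂ φ ζ x⁆
      = ((Real.sin (φ x) - pd12 φ x : ℝ) : ℂ) • su2e₂ := by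
  rw [fderiv_sgU₁_apply hφ₁, fderiv_sgU₂_apply hφ, lie_sgU₁_sgU₂ hζ]
  push_cast [pd12, pd1]
  module

/-- The zero curvature condition for the pseudospherical-surface linear problem holds for
all `ζ ≠ 0` iff `φ` satisfies the sine-Gordon equation `φ,₁₂ = sin φ`. -/
theorem sine_gordon_zero_curvature (φ : ℝ × ℝ → ℝ) (hφ : ContDiff ℝ 2 φ) :
    (∀ ζ : ℂ, ζ ≠ 0 → ∀ x : ℝ × ℝ,
        fderiv ℝ (sgU₁ φ ζ) x (0, 1) - fderiv ℝ (sgU₂ φ ζ) x (1, 0)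
          + (sgU₁ φ ζ x * sgU₂ φ ζ x - sgU₂ φ ζ x * sgU₁ φ ζ x) = 0)
      ↔ ∀ x : ℝ × ℝ, pd12 φ x = Real.sin (φ x) := by
  have hφ₁ : ContDiff ℝ 1 (pd1 φ) := contDiff_pd1 hφ
  have key : ∀ ζ : ℂ, ζ ≠ 0 → ∀ x : ℝ × ℝ,
      fderiv ℝ (sgU₁ φ ζ) x (0, 1) - fderiv ℝ (sgU₂ φ ζ) x (1, 0)
          + (sgU₁ φ ζ x * sgU₂ φ ζ x - sgU₂ φ ζ x * sgU₁ φ ζ x) = 0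
        ↔ pd12 φ x = Real.sin (φ x) := fun ζ hζ x => by
    rw [← Ring.lie_def, zeroCurvature_sgU hζ (hφ.differentiable two_ne_zero x)
      (hφ₁.differentiable one_ne_zero x), smul_eq_zero_iff_left su2e₂_ne_zero,
      Complex.ofReal_eq_zero, sub_eq_zero, eq_comm]
  exact ⟨fun h x => (key 1 one_ne_zero x).1 (h 1 one_ne_zero x),
    fun h ζ hζ x => (key ζ hζ x).2 (h x)⟩
end
end

section
/- Let λ ∈ ℝ and let λ₁, λ₂ ∈ ℂ with Im λ₁ ≠ 0, Im λ₂ ≠ 0, λ ≠ λ₁, λ ≠ λ₂, and λ₁ ≠ conj(λ₂). Define d₁ := Im λ₁ / |λ − λ₁|², d₂ := Im λ₂ / |λ − λ₂|², and E₁₂ := (λ₁ − λ₂)(λ − conj λ₂) / ((λ₁ − conj λ₂)(λ − λ₂)), E₂₁ := (λ₂ − λ₁)(λ − conj λ₁) / ((λ₂ − conj λ₁)(λ − λ₁)). Then d₁·(conj(E₁₂) − 1) = d₂·(E₂₁ − 1). -/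
/-!
For real `λ` one has `|λ - λₖ|² = (λ - λₖ)(λ - λ̄ₖ)` and `Im λₖ = (λₖ - λ̄ₖ)/2i`, so after
conjugating `E₁₂` both sides of the constraint are rational functions of `λ, λₖ, λ̄ₖ`;
treating `λ̄₁, λ̄₂` as independent variables, both reduce to the same symmetric expression.
-/

open Complex ComplexConjugate

lemma ofReal_im_div_norm_sub_sq (z : ℝ) (a : ℂ) :
    ((a.im / ‖(z : ℂ) - a‖ ^ 2 : ℝ) : ℂ)
      = (2 * I)⁻¹ * ((a - conj a) / ((z - a) * (z - conj a))) := by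
  rw [ofReal_div, ← normSq_eq_norm_sq, ← mul_conj, map_sub, conj_ofReal, im_eq_sub_conj]
  ring

lemma conj_cross_ratio (z : ℝ) (a b : ℂ) :
    conj ((a - b) * (z - conj b) / ((a - conj b) * (z - b)))
      = (conj a - conj b) * (z - b) / ((conj a - b) * (z - conj b)) := by
  simp only [map_div₀, map_mul, map_sub, conj_conj, conj_ofReal]

lemma ofReal_sub_conj_ne_zero {z : ℝ} {a : ℂ} (h : (z : ℂ) ≠ a) : (z : ℂ) - conj a ≠ 0 := by
  rw [← conj_ofReal, ← map_sub, map_ne_zero]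
  exact sub_ne_zero.mpr h

/-- Both sides equal `(a - m) * (b - n) / ((z - a) * (z - n) * (m - b))`. -/
lemma two_soliton_identity {K : Type*} [Field K] {z a b m n : K} (ha : z - a ≠ 0)
    (hb : z - b ≠ 0) (hm : z - m ≠ 0) (hn : z - n ≠ 0) (hmb : m - b ≠ 0) :
    (a - m) / ((z - a) * (z - m)) * ((m - n) * (z - b) / ((m - b) * (z - n)) - 1)
      = (b - n) / ((z - b) * (z - n)) * ((b - a) * (z - m) / ((b - m) * (z - a)) - 1) := by
  have hbm : b - m ≠ 0 := sub_ne_zero.mpr (sub_ne_zero.mp hmb).symm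
  field_simp
  ring

theorem two_soliton_parameter_constraint_general
    (lam : ℝ) (lam₁ lam₂ : ℂ)
    (hne₁ : (lam : ℂ) ≠ lam₁) (hne₂ : (lam : ℂ) ≠ lam₂)
    (hne₁₂ : lam₁ ≠ (starRingEnd ℂ) lam₂) :
    ((lam₁.im / ‖(lam : ℂ) - lam₁‖ ^ 2 : ℝ) : ℂ) *
        ((starRingEnd ℂ) ((lam₁ - lam₂) * ((lam : ℂ) - (starRingEnd ℂ) lam₂) /
          ((lam₁ - (starRingEnd ℂ) lam₂) * ((lam : ℂ) - lam₂))) - 1)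
      = ((lam₂.im / ‖(lam : ℂ) - lam₂‖ ^ 2 : ℝ) : ℂ) *
        ((lam₂ - lam₁) * ((lam : ℂ) - (starRingEnd ℂ) lam₁) /
          ((lam₂ - (starRingEnd ℂ) lam₁) * ((lam : ℂ) - lam₁)) - 1) := by
  have hconj : conj lam₁ - lam₂ ≠ 0 := by
    rw [sub_ne_zero, Ne, ← conj_conj lam₂, (RingHom.injective _).eq_iff]
    exact hne₁₂
  rw [ofReal_im_div_norm_sub_sq, ofReal_im_div_norm_sub_sq, conj_cross_ratio,
    mul_assoc, mul_assoc,
    two_soliton_identity (sub_ne_zero.mpr hne₁) (sub_ne_zero.mpr hne₂)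
      (ofReal_sub_conj_ne_zero hne₁) (ofReal_sub_conj_ne_zero hne₂) hconj]

/-- The constraint `d₁(e^{Δ−iδ₁} − 1) = d₂(e^{Δ+iδ₂} − 1)` relating the interaction
parameters of two-soliton su(2)-AKNS surfaces: with `dₖ = Im λₖ/|λ−λₖ|²`,
`E₁₂ = (λ₁−λ₂)(λ−λ̄₂)/((λ₁−λ̄₂)(λ−λ₂))`, `E₂₁ = (λ₂−λ₁)(λ−λ̄₁)/((λ₂−λ̄₁)(λ−λ₁))`,
one has `d₁·(conj E₁₂ − 1) = d₂·(E₂₁ − 1)`. -/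
theorem two_soliton_parameter_constraint
    (lam : ℝ) (lam₁ lam₂ : ℂ)
    (h₁ : lam₁.im ≠ 0) (h₂ : lam₂.im ≠ 0)
    (hne₁ : (lam : ℂ) ≠ lam₁) (hne₂ : (lam : ℂ) ≠ lam₂)
    (hne₁₂ : lam₁ ≠ (starRingEnd ℂ) lam₂) :
    ((lam₁.im / ‖(lam : ℂ) - lam₁‖ ^ 2 : ℝ) : ℂ) *
        ((starRingEnd ℂ) ((lam₁ - lam₂) * ((lam : ℂ) - (starRingEnd ℂ) lam₂) /
          ((lam₁ - (starRingEnd ℂ) lam₂) * ((lam : ℂ) - lam₂))) - 1)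
      = ((lam₂.im / ‖(lam : ℂ) - lam₂‖ ^ 2 : ℝ) : ℂ) *
        ((lam₂ - lam₁) * ((lam : ℂ) - (starRingEnd ℂ) lam₁) /
          ((lam₂ - (starRingEnd ℂ) lam₁) * ((lam : ℂ) - lam₁)) - 1) :=
  two_soliton_parameter_constraint_general lam lam₁ lam₂ hne₁ hne₂ hne₁₂
end

section
/- Let α ∈ ℝ with α ≠ 0, and consider the dispersion function ω(μ) := −2αμ² (the Localized Induction Equation case). Let λ ∈ ℝ and λₖ = aₖ + i bₖ ∈ ℂ with bₖ ≠ 0. Define the group velocity v^g := Im ω(λₖ)/bₖ − ω′(λ), the rotation rate Ω := 2(ω(λ) − Re ω(λₖ)) − 2(λ − aₖ)·Im ω(λₖ)/bₖ, and c := Re(1/(conj(λₖ) − λ)). Then Ω = −4α·|λ − λₖ|² ≠ 0 and c = v^g / Ω; i.e., the parameter c equals the distance travelled by the soliton's wave envelope during one full circle of the wave maximum. -/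
/-!
For `ω(μ) = −2αμ²` one has `Im ω(λₖ) / Im λₖ = −4α Re λₖ`, so `v^g = 4α(λ − Re λₖ)` and
`Ω = −4α((λ − Re λₖ)² + (Im λₖ)²) = −4α|λ − λₖ|²`, while
`Re(1/(λ̄ₖ − λ)) = (Re λₖ − λ)/|λ − λₖ|²`; the factor `−4α` cancels in `v^g / Ω`.
-/

open Complex

def lieDispersion (α : ℝ) (μ : ℂ) : ℂ := -2 * α * μ ^ 2

noncomputable def groupVelocity (ω : ℂ → ℂ) (lamk : ℂ) (lam : ℝ) : ℂ :=
  (((ω lamk).im / lamk.im : ℝ) : ℂ) - deriv ω lam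

noncomputable def rotationRate (ω : ℂ → ℂ) (lamk : ℂ) (lam : ℝ) : ℂ :=
  2 * (ω lam - (ω lamk).re) - 2 * (lam - lamk.re) * (((ω lamk).im / lamk.im : ℝ) : ℂ)

section LIE

variable (α : ℝ)

lemma lieDispersion_re (μ : ℂ) : (lieDispersion α μ).re = -2 * α * (μ.re ^ 2 - μ.im ^ 2) := by
  simp [lieDispersion, pow_two]

lemma lieDispersion_im (μ : ℂ) : (lieDispersion α μ).im = -4 * α * μ.re * μ.im := by
  simp [lieDispersion, pow_two]
  ring

lemma lieDispersion_im_div_im {μ : ℂ} (hμ : μ.im ≠ 0) :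
    (lieDispersion α μ).im / μ.im = -4 * α * μ.re := by
  rw [lieDispersion_im]
  field_simp

lemma hasDerivAt_lieDispersion (μ : ℂ) : HasDerivAt (lieDispersion α) (-4 * α * μ) μ := by
  refine ((hasDerivAt_pow 2 μ).const_mul (-2 * (α : ℂ))).congr_deriv ?_
  norm_num
  ring

lemma groupVelocity_lieDispersion (x : ℝ) {z : ℂ} (hz : z.im ≠ 0) :
    groupVelocity (lieDispersion α) z x = 4 * α * (x - z.re) := by
  rw [groupVelocity, (hasDerivAt_lieDispersion α x).deriv, lieDispersion_im_div_im α hz]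
  push_cast
  ring

lemma sq_norm_ofReal_sub (x : ℝ) (z : ℂ) : ‖(x : ℂ) - z‖ ^ 2 = (x - z.re) ^ 2 + z.im ^ 2 := by
  simp [Complex.sq_norm, Complex.normSq_apply]
  ring

lemma rotationRate_lieDispersion (x : ℝ) {z : ℂ} (hz : z.im ≠ 0) :
    rotationRate (lieDispersion α) z x = -4 * α * ((‖(x : ℂ) - z‖ : ℝ) : ℂ) ^ 2 := by
  rw [rotationRate, lieDispersion_im_div_im α hz, lieDispersion_re, ← ofReal_pow,
    sq_norm_ofReal_sub]
  simp only [lieDispersion]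
  push_cast
  ring

end LIE

lemma re_one_div_conj_sub_ofReal (z : ℂ) (x : ℝ) :
    (1 / (starRingEnd ℂ z - x)).re = (z.re - x) / ‖(x : ℂ) - z‖ ^ 2 := by
  rw [one_div, inv_re, ← conj_ofReal x, ← map_sub, normSq_conj, normSq_eq_norm_sq, norm_sub_rev]
  simp

/-- For the Localized Induction Equation dispersion `ω(μ) = −2αμ²`, the rotation rate is
`Ω = −4α|λ−λₖ|² ≠ 0` and the parameter `c = Re(1/(λ̄ₖ−λ))` equals `v^g/Ω`, the distance
travelled by the wave envelope during one full circle of the wave maximum. -/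
theorem lie_envelope_distance_parameter
    (α lam a b : ℝ) (hα : α ≠ 0) (hb : b ≠ 0)
    (ω : ℂ → ℂ) (hω : ω = fun μ : ℂ => -2 * (α : ℂ) * μ ^ 2)
    (lamk : ℂ) (hlamk : lamk = (a : ℂ) + (b : ℂ) * Complex.I)
    (vg Om c : ℂ)
    (hvg : vg = (((ω lamk).im / b : ℝ) : ℂ) - deriv ω (lam : ℂ))
    (hOm : Om = 2 * (ω (lam : ℂ) - ((ω lamk).re : ℂ))
        - 2 * ((lam : ℂ) - (a : ℂ)) * (((ω lamk).im / b : ℝ) : ℂ))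
    (hc : c = (((1 / ((starRingEnd ℂ) lamk - (lam : ℂ))).re : ℝ) : ℂ)) :
    Om = -4 * (α : ℂ) * ((‖(lam : ℂ) - lamk‖ : ℝ) : ℂ) ^ 2 ∧ Om ≠ 0 ∧ c = vg / Om := by
  obtain ⟨rfl, rfl⟩ : lamk.re = a ∧ lamk.im = b := by simp [hlamk]
  obtain rfl : ω = lieDispersion α := hω
  have hOm' : Om = -4 * α * ((‖(lam : ℂ) - lamk‖ : ℝ) : ℂ) ^ 2 :=
    hOm.trans (rotationRate_lieDispersion α lam hb)
  have hvg' : vg = 4 * α * (lam - lamk.re) := hvg.trans (groupVelocity_lieDispersion α lam hb)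
  have hnorm : ((‖(lam : ℂ) - lamk‖ : ℝ) : ℂ) ≠ 0 := by
    rw [ofReal_ne_zero, norm_ne_zero_iff, sub_ne_zero]
    exact fun h => hb (by rw [← h, ofReal_im])
  have hOm_ne : Om ≠ 0 := by
    rw [hOm']
    exact mul_ne_zero (mul_ne_zero (by norm_num) (ofReal_ne_zero.2 hα))
      (pow_ne_zero 2 hnorm)
  refine ⟨hOm', hOm_ne, ?_⟩
  rw [eq_div_iff hOm_ne, hc, re_one_div_conj_sub_ofReal, hOm', hvg']
  push_cast
  field_simp
  ring
end
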